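/- Let n ≥ 1, k ≥ 2, let σ = (σ_2,…,σ_k) be a (k−1)-tuple of permutations of {1,…,n}, let σ_1 = id, and let π = σ^{-1} = (σ_2^{-1},…,σ_k^{-1}). For U ∈ E(σ) and i ∈ {1,…,k}, define U(i) = max{ j : {σ_i(1),…,σ_i(j)} ⊆ U } (with max ∅ = 0). Then the k-tuple (U(1),…,U(k)) is π-eligible, i.e., (U(1),…,U(k)) ∈ C(σ^{-1}). -/
import Mathlib


/-- The initial segment `{σ(1), …, σ(j)}` of a permutation `σ` of `{1,…,n}`
(encoded on `Fin n`), as a finset; for `j = 0` this is `∅`. -/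
def iniSeg {n : ℕ} (σ : Equiv.Perm (Fin n)) (j : ℕ) : Finset (Fin n) :=
  (Finset.univ.filter fun m : Fin n => (m : ℕ) < j).image σ

/-- The Edelman–Jamison lattice `E(σ)`: the join-subsemilattice of the powerset of
`{1,…,n}` (ordered by inclusion, with join `∪`) generated by the initial segments
`{σ_i(1),…,σ_i(j)}`, `1 ≤ i ≤ k`, `0 ≤ j ≤ n`. -/
def EJ {n k : ℕ} (σ : Fin k → Equiv.Perm (Fin n)) : Set (Finset (Fin n)) :=
  supClosure {S | ∃ (i : Fin k) (j : ℕ), j ≤ n ∧ S = iniSeg (σ i) j}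

/-- `π`-eligibility of a `k`-tuple `x ∈ {0,…,n}^k`: `π_{ij}(x_i + 1) ≥ x_j + 1` holds
whenever `x_i < n`, where `π_{ij} = π_{1j} ∘ π_{1i}⁻¹` (a value `v ∈ {1,…,n}` is encoded
as the element `v - 1` of `Fin n`). -/
def Eligible {n k : ℕ} (π : Fin k → Equiv.Perm (Fin n)) (x : Fin k → ℕ) : Prop :=
  (∀ i, x i ≤ n) ∧
    ∀ (i j : Fin k) (h : x i < n), x j + 1 ≤ ((π j) ((π i)⁻¹ ⟨x i, h⟩) : ℕ) + 1

/-- `coordOf σ U i = max { j : {σ_i(1),…,σ_i(j)} ⊆ U }`, where `max ∅ = 0`. -/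
noncomputable def coordOf {n k : ℕ} (σ : Fin k → Equiv.Perm (Fin n))
    (U : Finset (Fin n)) (i : Fin k) : ℕ :=
  sSup {j : ℕ | j ≤ n ∧ iniSeg (σ i) j ⊆ U}

lemma mem_iniSeg {n : ℕ} (σ : Equiv.Perm (Fin n)) (j : ℕ) (a : Fin n) :
    a ∈ iniSeg σ j ↔ ((σ⁻¹ a : Fin n) : ℕ) < j := by
  simp only [iniSeg, Finset.mem_image, Finset.mem_filter, Finset.mem_univ, true_and]
  constructor
  · rintro ⟨m, hm, rfl⟩
    simpa using hm
  · intro h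
    exact ⟨σ⁻¹ a, h, by simp⟩

/-- Let `n ≥ 1`, `k ≥ 2`, let `σ = (σ_2,…,σ_k)` be a `(k-1)`-tuple of
permutations of `{1,…,n}` (encoded with `σ 0 = id` playing the role of `σ_1`), and let
`π = σ⁻¹`. For `U ∈ E(σ)` define `U(i) = max { j : {σ_i(1),…,σ_i(j)} ⊆ U }` (with
`max ∅ = 0`). Then `(U(1),…,U(k))` is `π`-eligible, i.e. it belongs to `C(σ⁻¹)`. -/
theorem statement1 (n k : ℕ) (hn : 1 ≤ n) (hk : 2 ≤ k)
    (σ : Fin k → Equiv.Perm (Fin n)) (hσ : σ ⟨0, by omega⟩ = 1)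
    (U : Finset (Fin n)) (hU : U ∈ EJ σ) :
    Eligible (fun i => (σ i)⁻¹) (coordOf σ U) := by
  -- basic facts about the sets whose sSup we take
  set S : Fin k → Set ℕ := fun i => {j : ℕ | j ≤ n ∧ iniSeg (σ i) j ⊆ U} with hS
  have hzero : ∀ i, (0 : ℕ) ∈ S i := by
    intro i
    refine ⟨Nat.zero_le _, ?_⟩
    intro a ha
    rw [mem_iniSeg] at ha
    omega
  have hbdd : ∀ i, BddAbove (S i) := fun i => ⟨n, fun j hj => hj.1⟩
  have hmem : ∀ i, coordOf σ U i ∈ S i := by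
    intro i
    exact Nat.sSup_mem ⟨0, hzero i⟩ (hbdd i)
  constructor
  · intro i; exact (hmem i).1
  · intro i j h
    simp only [inv_inv]
    -- a = σ i ⟨x i, h⟩ is not in U
    set a : Fin n := σ i ⟨coordOf σ U i, h⟩ with ha
    have haU : a ∉ U := by
      intro haU
      have hnot : coordOf σ U i + 1 ∉ S i := by
        intro hin
        have := le_csSup (hbdd i) hin
        have : coordOf σ U i + 1 ≤ coordOf σ U i := this
        omega
      apply hnot
      refine ⟨by omega, ?_⟩
      intro b hb
      rw [mem_iniSeg] at hb
      rcases Nat.lt_succ_iff_lt_or_eq.mp hb with hb | hb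
      · exact (hmem i).2 (by rw [mem_iniSeg]; exact hb)
      · have : (σ i)⁻¹ b = ⟨coordOf σ U i, h⟩ := Fin.ext hb
        have hb' : b = a := by
          rw [ha, ← this]; simp
        rwa [hb']
    -- conclude
    have key : coordOf σ U j ≤ ((σ j)⁻¹ a : ℕ) := by
      by_contra hlt
      push_neg at hlt
      have : a ∈ iniSeg (σ j) (coordOf σ U j) := by
        rw [mem_iniSeg]; exact hlt
      exact haU ((hmem j).2 this)
    omega
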